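/- Let 𝒩 and 𝒬 be nontrivial varieties of groups and 𝒱 = 𝒩𝒬. Let G ∈ 𝒱, H a subgroup of G, N = 𝒬(G) the verbal subgroup of G associated to 𝒬, and D = dom_N^𝒩(N ∩ H), regarded as a subgroup of G. Let D' be a subgroup of N such that D ⊆ D', dom_N^𝒩(D') = D', H·D' = D'·H, and N_G(D')·N = G. Then ⟨H, D⟩ ⊆ dom_G^{𝒩𝒬}(H) ⊆ HD'. -/

import Mathlib

/-- A bundled group: a type in universe `u` together with a group structure. -/
structure GroupT : Type (u + 1) where
  carrier : Type u
  [str : Group carrier]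

attribute [instance] GroupT.str

/-- A variety of groups: a class of groups closed under isomorphism, subgroups,
homomorphic images, and arbitrary direct products indexed by types in the universe. -/
structure GroupVariety : Type (u + 1) where
  Mem : GroupT.{u} → Prop
  iso_closed : ∀ {G H : GroupT.{u}}, G.carrier ≃* H.carrier → Mem G → Mem H
  subgroup_closed : ∀ (G : GroupT.{u}) (H : Subgroup G.carrier), Mem G → Mem ⟨H⟩
  quotient_closed : ∀ (G H : GroupT.{u}) (f : G.carrier →* H.carrier),
      Function.Surjective f → Mem G → Mem H
  pi_closed : ∀ (ι : Type u) (f : ι → GroupT.{u}),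
      (∀ i, Mem (f i)) → Mem ⟨∀ i, (f i).carrier⟩

/-- A variety is nontrivial if it contains some nontrivial group and
does not contain all groups. -/
def GroupVariety.IsNontrivial (V : GroupVariety.{u}) : Prop :=
  (∃ G : GroupT.{u}, V.Mem G ∧ Nontrivial G.carrier) ∧ ∃ G : GroupT.{u}, ¬ V.Mem G

/-- The dominion of a subgroup `H` of `G` relative to a class `C` of groups:
all elements of `G` on which any two homomorphisms into a `C`-group agreeing on `H`
must agree. -/
def dominion (C : GroupT.{u} → Prop) (G : Type u) [Group G] (H : Subgroup G) : Set G :=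
  {a | ∀ K : GroupT.{u}, C K → ∀ f g : G →* K.carrier, (∀ h ∈ H, f h = g h) → f a = g a}

/-- The product variety `𝒩𝒬`: the class of groups having a normal subgroup in `𝒩`
with quotient in `𝒬`. -/
def ProductVariety (N Q : GroupVariety.{u}) (G : GroupT.{u}) : Prop :=
  ∃ (M : Subgroup G.carrier) (h : M.Normal),
    N.Mem ⟨M⟩ ∧ (letI := h; Q.Mem ⟨G.carrier ⧸ M⟩)

/-- The verbal subgroup `𝒬(G)`: the intersection of all normal subgroups of `G`
whose quotient lies in `𝒬`. -/
def verbalSubgroup (Q : GroupVariety.{u}) (G : Type u) [Group G] : Subgroup G :=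
  ⨅ M ∈ {M : Subgroup G | ∃ h : M.Normal, (letI := h; Q.Mem ⟨G ⧸ M⟩)}, M

open scoped Pointwise

/-!
The lower bound holds because the dominion is a subgroup containing `H`, and every map into an
`𝒩𝒬`-group sends the verbal subgroup `N = 𝒬(G)` into the `𝒩`-part of the target, where agreement
on `N ∩ H` already forces agreement on its `𝒩`-dominion.

For the upper bound, a wreath product `A ≀ (G ⧸ N)` with `A ∈ 𝒩` nontrivial shows that every
subgroup of a group in `𝒬` is `𝒩𝒬`-closed, so an element `a` of the dominion lies in `HN`.
Since `D'` is `𝒩`-closed in `N`, it is the equalizer of two maps `φ, ψ : N → A` with `A ∈ 𝒩`.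
Choose a transversal `t` of `N` built from lifts into `H` and into the normalizer of `D'`; then
the Kaloujnine–Krasner maps `G → A ≀ (G ⧸ N)` induced by `φ` and `ψ` agree on `H`, hence at `a`,
and comparing them at the coset of `a` puts `t(a)⁻¹ a` in `D'`.
-/

lemma mulAutArrow_mulSingle {Q X A : Type*} [Group Q] [MulAction Q X] [Group A] [DecidableEq X]
    (q : Q) (x : X) (a : A) :
    (mulAutArrow q : MulAut (X → A)) (Pi.mulSingle x a) = Pi.mulSingle (q • x) a := by
  ext y
  change (Pi.mulSingle x a : X → A) (q⁻¹ • y) = _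
  simp only [Pi.mulSingle_apply, inv_smul_eq_iff]

lemma mulAutArrow_mulSingle_eq_self_iff {Q X A : Type*} [Group Q] [MulAction Q X] [Group A]
    [DecidableEq X] {a : A} (ha : a ≠ 1) (q : Q) (x : X) :
    (mulAutArrow q : MulAut (X → A)) (Pi.mulSingle x a) = Pi.mulSingle x a ↔ q • x = x := by
  rw [mulAutArrow_mulSingle]
  refine ⟨fun h => by_contra fun hx => ha ?_, fun h => by rw [h]⟩
  simpa [hx] using congrFun h (q • x)

lemma SemidirectProduct.commute_inr_inl_iff {N Q : Type*} [Group N] [Group Q]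
    {φ : Q →* MulAut N} (q : Q) (n : N) :
    Commute (inr q : N ⋊[φ] Q) (inl n) ↔ φ q n = n := by
  rw [commute_iff_eq, ← mul_inv_eq_iff_eq_mul, ← map_inv, ← inl_aut, inl_injective.eq_iff]

lemma MonoidHom.exists_section_one {G G' : Type*} [Group G] [Group G'] (f : G →* G')
    (S : Subgroup G) :
    ∃ σ : G' → G, σ 1 = 1 ∧ ∀ y ∈ S.map f, σ y ∈ S ∧ f (σ y) = y := by
  classical
  choose! σ hσS hσ using fun y (hy : y ∈ S.map f) => Subgroup.mem_map.1 hy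
  refine ⟨Function.update σ 1 1, by simp, fun y hy => ?_⟩
  rcases eq_or_ne y 1 with rfl | hy1
  · simp [S.one_mem]
  · simpa [hy1] using ⟨hσS y hy, hσ y hy⟩

lemma GroupVariety.mem_quotient_ker (V : GroupVariety.{u}) {G K : Type u} [Group G] [Group K]
    (f : G →* K) (hK : V.Mem ⟨K⟩) : V.Mem ⟨G ⧸ f.ker⟩ :=
  V.iso_closed (QuotientGroup.quotientKerEquivRange f).symm (V.subgroup_closed ⟨K⟩ f.range hK)

lemma productVariety_semidirectProduct {𝒩 𝒬 : GroupVariety.{u}} {B Q : Type u} [Group B]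
    [Group Q] (φ : Q →* MulAut B) (hB : 𝒩.Mem ⟨B⟩) (hQ : 𝒬.Mem ⟨Q⟩) :
    ProductVariety 𝒩 𝒬 ⟨B ⋊[φ] Q⟩ := by
  refine ⟨SemidirectProduct.rightHom.ker, inferInstance, ?_, ?_⟩
  · exact 𝒩.iso_closed ((MonoidHom.ofInjective SemidirectProduct.inl_injective).trans
      (MulEquiv.subgroupCongr SemidirectProduct.range_inl_eq_ker_rightHom)) hB
  · exact 𝒬.iso_closed
      (QuotientGroup.quotientKerEquivOfSurjective _ SemidirectProduct.rightHom_surjective).symm hQ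

section Verbal

variable (Q : GroupVariety.{u}) {G K : Type u} [Group G] [Group K]

instance verbalSubgroup_normal : (verbalSubgroup Q G).Normal :=
  Subgroup.normal_iInf_normal fun _ => Subgroup.normal_iInf_normal fun hM => hM.1

lemma verbalSubgroup_le {M : Subgroup G} [M.Normal] (hM : Q.Mem ⟨G ⧸ M⟩) :
    verbalSubgroup Q G ≤ M :=
  iInf₂_le M ⟨inferInstance, hM⟩

lemma verbalSubgroup_le_comap (f : G →* K) (M : Subgroup K) [M.Normal]
    (hM : Q.Mem ⟨K ⧸ M⟩) : verbalSubgroup Q G ≤ M.comap f := by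
  have := verbalSubgroup_le Q (Q.mem_quotient_ker ((QuotientGroup.mk' M).comp f) hM)
  rwa [← MonoidHom.comap_ker, QuotientGroup.ker_mk'] at this

lemma mem_quotient_verbalSubgroup : Q.Mem ⟨G ⧸ verbalSubgroup Q G⟩ := by
  let S := {M : Subgroup G | ∃ h : M.Normal, (letI := h; Q.Mem ⟨G ⧸ M⟩)}
  have (M : S) : (M : Subgroup G).Normal := M.2.1
  let Φ : G →* ∀ M : S, G ⧸ (M : Subgroup G) :=
    MonoidHom.pi fun M => QuotientGroup.mk' (M : Subgroup G)
  have hker : Φ.ker = verbalSubgroup Q G := by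
    ext x
    simp [Φ, S, verbalSubgroup, Subgroup.mem_iInf, funext_iff]
  have hpi : Q.Mem ⟨∀ M : S, G ⧸ (M : Subgroup G)⟩ :=
    Q.pi_closed S (fun M => ⟨G ⧸ (M : Subgroup G)⟩) fun M => M.2.2
  exact Q.iso_closed (QuotientGroup.quotientMulEquivOfEq hker) (Q.mem_quotient_ker Φ hpi)

end Verbal

section Dominion

def dominionSubgroup (C : GroupT.{u} → Prop) {G : Type u} [Group G] (H : Subgroup G) :
    Subgroup G where
  carrier := dominion C G H
  one_mem' _ _ f g _ := by simp only [map_one]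
  mul_mem' ha hb K hK f g hfg := by simp only [map_mul, ha K hK f g hfg, hb K hK f g hfg]
  inv_mem' ha K hK f g hfg := by simp only [map_inv, ha K hK f g hfg]

variable {C : GroupT.{u} → Prop} {G K : Type u} [Group G] [Group K]

lemma le_dominionSubgroup (H : Subgroup G) : H ≤ dominionSubgroup C H :=
  fun h hh _ _ _ _ hfg => hfg h hh

lemma map_mem_dominion {H : Subgroup G} {a : G} (ha : a ∈ dominion C G H) (f : G →* K) :
    f a ∈ dominion C K (H.map f) :=
  fun L hL g₁ g₂ hg => ha L hL (g₁.comp f) (g₂.comp f) fun h hh => hg (f h) (H.mem_map_of_mem f hh)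

lemma GroupVariety.exists_eqLocus_eq_of_dominion_subset (V : GroupVariety.{u}) {H : Subgroup G}
    (hH : dominion V.Mem G H ⊆ H) :
    ∃ L : GroupT.{u}, V.Mem L ∧ ∃ f g : G →* L.carrier, f.eqLocus g = H := by
  have hsep (x : {x : G // x ∉ H}) : ∃ L : GroupT.{u}, V.Mem L ∧
      ∃ f g : G →* L.carrier, (∀ h ∈ H, f h = g h) ∧ f x ≠ g x := by
    by_contra! h
    exact x.2 (hH h)
  choose L hL f g hfg hne using hsep
  refine ⟨⟨∀ x, (L x).carrier⟩, V.pi_closed _ L hL, MonoidHom.pi f, MonoidHom.pi g,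
    SetLike.ext fun x => ⟨fun h => by_contra fun hx => hne ⟨x, hx⟩ (congrFun h ⟨x, hx⟩),
      fun hx => funext fun i => hfg i x hx⟩⟩

end Dominion

section ProductVariety

variable {𝒩 𝒬 : GroupVariety.{u}}

lemma val_mem_dominion_productVariety {G : Type u} [Group G] {H : Subgroup G}
    {n : verbalSubgroup 𝒬 G} (hn : n ∈ dominion 𝒩.Mem _ (H.subgroupOf (verbalSubgroup 𝒬 G))) :
    (n : G) ∈ dominion (ProductVariety 𝒩 𝒬) G H := by
  rintro K ⟨M, hM, hM𝒩, hM𝒬⟩ f g hfg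
  let restrict (φ : G →* K.carrier) : verbalSubgroup 𝒬 G →* M :=
    (φ.comp (verbalSubgroup 𝒬 G).subtype).codRestrict M
      fun x => verbalSubgroup_le_comap 𝒬 φ M hM𝒬 x.2
  exact congrArg Subtype.val
    (hn ⟨M⟩ hM𝒩 (restrict f) (restrict g) fun h hh => Subtype.ext (hfg h hh))

/-- The wreath product `A ≀ (Q ⧸ K)` separates `K` from the rest of `Q`: conjugation by the
indicator of the base coset commutes exactly with `K`. -/
lemma dominion_productVariety_subset (h𝒩 : ∃ A : GroupT.{u}, 𝒩.Mem A ∧ Nontrivial A.carrier)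
    {Q : Type u} [Group Q] (hQ : 𝒬.Mem ⟨Q⟩) (K : Subgroup Q) :
    dominion (ProductVariety 𝒩 𝒬) Q K ⊆ K := by
  classical
  intro q hq
  obtain ⟨A, hA, _⟩ := h𝒩
  obtain ⟨a, ha⟩ := exists_ne (1 : A.carrier)
  let W := (Q ⧸ K → A.carrier) ⋊[mulAutArrow] Q
  let c : W := .inl (Pi.mulSingle ((1 : Q) : Q ⧸ K) a)
  have hconj (q : Q) :
      (MulAut.conj c).toMonoidHom.comp SemidirectProduct.inr q = .inr q ↔ q ∈ K := by
    rw [MonoidHom.comp_apply, MulEquiv.coe_toMonoidHom, MulAut.conj_apply, mul_inv_eq_iff_eq_mul,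
      eq_comm, ← commute_iff_eq, SemidirectProduct.commute_inr_inl_iff,
      mulAutArrow_mulSingle_eq_self_iff ha, ← MulAction.mem_stabilizer_iff,
      MulAction.stabilizer_quotient]
  have hW : ProductVariety 𝒩 𝒬 ⟨W⟩ :=
    productVariety_semidirectProduct _ (𝒩.pi_closed _ (fun _ => A) fun _ => hA) hQ
  exact (hconj q).1 (hq ⟨W⟩ hW _ _ fun k hk => (hconj k).2 hk)

end ProductVariety

section Transversal

variable {G : Type*} [Group G] {N : Subgroup G} [N.Normal]

/-- The transversal is `t (k * r) = s k * w r`, where `x = k * r` splits `x` along a right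
transversal of `HN ⧸ N` through `1`, `s` lifts into `H` and `w` into the normalizer of `D'`;
then `(t x)⁻¹ h t (h⁻¹ x)` is a conjugate by `w r` of an element of `H ∩ N`. -/
lemma exists_transversal_conj_mem (H D' : Subgroup G) (hHN : H ⊓ N ≤ D')
    (hnorm : (Subgroup.normalizer (D' : Set G)).map (QuotientGroup.mk' N) = ⊤) :
    ∃ t : G ⧸ N → G, (∀ x, (t x : G ⧸ N) = x) ∧ t 1 = 1 ∧
      (∀ x ∈ H.map (QuotientGroup.mk' N), t x ∈ H) ∧
      ∀ h ∈ H, ∀ x, (t x)⁻¹ * h * t ((h : G ⧸ N)⁻¹ * x) ∈ D' := by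
  set π := QuotientGroup.mk' N
  obtain ⟨s, hs1, hs⟩ := π.exists_section_one H
  obtain ⟨w, hw1, hw⟩ := π.exists_section_one (Subgroup.normalizer (D' : Set G))
  rw [hnorm] at hw
  obtain ⟨T, hT, hT1⟩ := (H.map π).exists_isComplement_right 1
  set e := hT.equiv
  have he (x : G ⧸ N) (hx : x ∈ H.map π) : ((e x).1 : G ⧸ N) = x ∧ ((e x).2 : G ⧸ N) = 1 :=
    ⟨by rw [hT.equiv_fst_eq_self_of_mem_of_one_mem hT1 hx],
      by rw [hT.equiv_snd_eq_one_of_mem_of_one_mem hT1 hx]⟩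
  refine ⟨fun x => s (e x).1 * w (e x).2, fun x => ?_, ?_, fun x hx => ?_, fun h hh x => ?_⟩
  · change π (_ * _) = x
    rw [map_mul, (hs _ (e x).1.2).2, (hw _ trivial).2]
    exact hT.equiv_fst_mul_equiv_snd x
  · simp only [he 1 (one_mem _), hs1, hw1, mul_one]
  · simpa only [he x hx, hw1, mul_one] using (hs x hx).1
  · have hq : (h : G ⧸ N)⁻¹ ∈ H.map π := inv_mem (H.mem_map_of_mem π hh)
    have hv : (s (e x).1)⁻¹ * h * s ((h : G ⧸ N)⁻¹ * (e x).1) ∈ D' := by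
      refine hHN (Subgroup.mem_inf.2 ⟨mul_mem (mul_mem (inv_mem (hs _ (e x).1.2).1) hh)
        (hs _ (mul_mem hq (e x).1.2)).1, ?_⟩)
      rw [← QuotientGroup.eq_one_iff]
      change π (_ * _ * _) = 1
      rw [map_mul, map_mul, map_inv, (hs _ (e x).1.2).2, (hs _ (mul_mem hq (e x).1.2)).2]
      simp only [π, QuotientGroup.mk'_apply]
      group
    have := (Subgroup.mem_normalizer_iff''.1 (hw (e x).2 trivial).1 _).1 hv
    have hex : ((e ((h : G ⧸ N)⁻¹ * x)).1 : G ⧸ N) = (h : G ⧸ N)⁻¹ * (e x).1 ∧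
        (e ((h : G ⧸ N)⁻¹ * x)).2 = (e x).2 := by
      rw [hT.equiv_mul_left ⟨_, hq⟩ x]
      exact ⟨rfl, rfl⟩
    dsimp only
    rw [hex.1, hex.2]
    convert this using 1
    group

end Transversal

section KaloujnineKrasner

variable {G A : Type*} [Group G] [Group A] {N : Subgroup G} [N.Normal]
  (t : G ⧸ N → G) (ht : ∀ x, (t x : G ⧸ N) = x)

def transversalCocycle (g : G) (x : G ⧸ N) : N :=
  ⟨(t x)⁻¹ * g * t ((g : G ⧸ N)⁻¹ * x), by
    rw [← QuotientGroup.eq_one_iff, QuotientGroup.mk_mul, QuotientGroup.mk_mul,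
      QuotientGroup.mk_inv, ht, ht]
    group⟩

lemma transversalCocycle_mul (g₁ g₂ : G) (x : G ⧸ N) :
    transversalCocycle t ht (g₁ * g₂) x =
      transversalCocycle t ht g₁ x * transversalCocycle t ht g₂ ((g₁ : G ⧸ N)⁻¹ * x) := by
  ext
  simp only [transversalCocycle, Subgroup.coe_mul, QuotientGroup.mk_mul, mul_inv_rev, mul_assoc,
    mul_inv_cancel_left]

def kaloujnineKrasner (χ : N →* A) : G →* ((G ⧸ N) → A) ⋊[mulAutArrow] (G ⧸ N) where
  toFun g := ⟨fun x => χ (transversalCocycle t ht g x), g⟩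
  map_one' := by
    ext x
    · simp only [transversalCocycle, QuotientGroup.mk_one, inv_one, one_mul, mul_one, inv_mul_cancel]
      exact χ.map_one
    · rfl
  map_mul' g₁ g₂ := by
    ext x
    · simp only [transversalCocycle_mul, map_mul, SemidirectProduct.mul_left]
      rfl
    · rfl

end KaloujnineKrasner

theorem dominion_productVariety_subset_mul {𝒩 𝒬 : GroupVariety.{u}}
    (h𝒩 : ∃ A : GroupT.{u}, 𝒩.Mem A ∧ Nontrivial A.carrier) {G : Type u} [Group G]
    {N : Subgroup G} [N.Normal] (hQ : 𝒬.Mem ⟨G ⧸ N⟩) (H D' : Subgroup G) (hHN : H ⊓ N ≤ D')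
    (hD' : dominion 𝒩.Mem N (D'.subgroupOf N) ⊆ D'.subgroupOf N)
    (hnorm : (Subgroup.normalizer (D' : Set G)).map (QuotientGroup.mk' N) = ⊤) :
    dominion (ProductVariety 𝒩 𝒬) G H ⊆ (H : Set G) * D' := by
  intro a ha
  obtain ⟨t, ht, ht1, htH, htD'⟩ := exists_transversal_conj_mem H D' hHN hnorm
  obtain ⟨A, hA, φ, ψ, hφψ⟩ := 𝒩.exists_eqLocus_eq_of_dominion_subset hD'
  have hφψ' (n : N) : φ n = ψ n ↔ (n : G) ∈ D' := by rw [← Subgroup.mem_subgroupOf, ← hφψ]; rfl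
  have hW := productVariety_semidirectProduct (𝒬 := 𝒬) mulAutArrow
    (𝒩.pi_closed (G ⧸ N) (fun _ => A) fun _ => hA) hQ
  have hKK := ha _ hW (kaloujnineKrasner t ht φ) (kaloujnineKrasner t ht ψ) fun h hh =>
    SemidirectProduct.ext (funext fun x => (hφψ' _).2 (htD' h hh x)) rfl
  have hπa : (a : G ⧸ N) ∈ H.map (QuotientGroup.mk' N) :=
    dominion_productVariety_subset h𝒩 hQ _ (map_mem_dominion ha _)
  have hd : (t a)⁻¹ * a ∈ D' := by
    simpa [transversalCocycle, ht1] using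
      (hφψ' _).1 (congrFun (congrArg SemidirectProduct.left hKK) a)
  exact ⟨t a, htH _ hπa, _, hd, mul_inv_cancel_left _ _⟩

theorem stmt6_general (𝒩 𝒬 : GroupVariety.{u}) (h𝒩 : 𝒩.IsNontrivial)
    (G : Type u) [Group G] (H : Subgroup G)
    (N : Subgroup G) (hN : N = verbalSubgroup 𝒬 G)
    (D : Set G) (hD : D = Subtype.val '' dominion 𝒩.Mem (↥N) (H.subgroupOf N))
    (D' : Subgroup G) (hDD' : D ⊆ (D' : Set G))
    (hD'closed : dominion 𝒩.Mem (↥N) (D'.subgroupOf N) = ((D'.subgroupOf N : Subgroup ↥N) : Set ↥N))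
    (hnorm : (Subgroup.normalizer (D' : Set G) : Set G) * (N : Set G) = Set.univ) :
    (Subgroup.closure ((H : Set G) ∪ D) : Set G) ⊆ dominion (ProductVariety 𝒩 𝒬) G H ∧
      dominion (ProductVariety 𝒩 𝒬) G H ⊆ (H : Set G) * (D' : Set G) := by
  subst hN hD
  have hDdom : Subtype.val '' dominion 𝒩.Mem _ (H.subgroupOf (verbalSubgroup 𝒬 G)) ⊆
      dominionSubgroup (ProductVariety 𝒩 𝒬) H := by
    rintro _ ⟨n, hn, rfl⟩
    exact val_mem_dominion_productVariety hn
  have hHN : H ⊓ verbalSubgroup 𝒬 G ≤ D' := fun v hv =>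
    hDD' ⟨⟨v, hv.2⟩, fun _ _ _ _ hfg => hfg _ (Subgroup.mem_subgroupOf.2 hv.1), rfl⟩
  have hnorm' :
      (Subgroup.normalizer (D' : Set G)).map (QuotientGroup.mk' (verbalSubgroup 𝒬 G)) = ⊤ := by
    refine eq_top_iff.2 fun x _ => QuotientGroup.induction_on x fun g => ?_
    obtain ⟨w, hw, n, hn, rfl⟩ := hnorm.superset (Set.mem_univ g)
    exact ⟨w, hw, (QuotientGroup.mk_mul_of_mem w hn).symm⟩
  exact ⟨(Subgroup.closure_le _).2 (Set.union_subset (le_dominionSubgroup H) hDdom),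
    dominion_productVariety_subset_mul h𝒩.1 (mem_quotient_verbalSubgroup 𝒬) H D' hHN
      hD'closed.le hnorm'⟩

theorem stmt6 (𝒩 𝒬 : GroupVariety.{u}) (h𝒩 : 𝒩.IsNontrivial) (h𝒬 : 𝒬.IsNontrivial)
    (G : Type u) [Group G] (hG : ProductVariety 𝒩 𝒬 ⟨G⟩) (H : Subgroup G)
    (N : Subgroup G) (hN : N = verbalSubgroup 𝒬 G)
    (D : Set G) (hD : D = Subtype.val '' dominion 𝒩.Mem (↥N) (H.subgroupOf N))
    (D' : Subgroup G) (hD'N : D' ≤ N) (hDD' : D ⊆ (D' : Set G))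
    (hD'closed : dominion 𝒩.Mem (↥N) (D'.subgroupOf N) = ((D'.subgroupOf N : Subgroup ↥N) : Set ↥N))
    (hcomm : (H : Set G) * (D' : Set G) = (D' : Set G) * (H : Set G))
    (hnorm : (Subgroup.normalizer (D' : Set G) : Set G) * (N : Set G) = Set.univ) :
    (Subgroup.closure ((H : Set G) ∪ D) : Set G) ⊆ dominion (ProductVariety 𝒩 𝒬) G H ∧
      dominion (ProductVariety 𝒩 𝒬) G H ⊆ (H : Set G) * (D' : Set G) :=
  stmt6_general 𝒩 𝒬 h𝒩 G H N hN D hD D' hDD' hD'closed hnorm
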